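/- arXiv:2605.21373 — 5 statements merged into one kernel-verified Lean document; each statement's English description precedes it below -/
import Mathlib

section
/- The sequence aₙ = (−1)ⁿ(n+1)(n+2) is of controlled growth: its power series equals 2/(1+x)³ on (−1,1) and (1−x)²·∑ₙ aₙxⁿ → 0 as x → 1⁻; but it is not of controlled absolute growth, since ∑ₙ |aₙ|xⁿ = 2/(1−x)³ and (1−x)²·∑ₙ|aₙ|xⁿ → ∞ as x → 1⁻. -/
open Filter Topology

/-- The Abel limit: `HasAbelLim a L` means the power series `∑ aₙ xⁿ` has radius of
convergence at least `1` (convergence for `|x| < 1`) and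
`(1 - x) * ∑ aₙ xⁿ → L` as `x → 1⁻`. -/
def HasAbelLim (a : ℕ → ℝ) (L : ℝ) : Prop :=
  (∀ x : ℝ, |x| < 1 → Summable fun n => a n * x ^ n) ∧
    Tendsto (fun x : ℝ => (1 - x) * ∑' n, a n * x ^ n) (𝓝[<] 1) (𝓝 L)

/-! Both series are `2 ∑ C(n+2, 2) rⁿ = 2 / (1 - r)³`, at `r = -x` and at `r = x`. Multiplied
by `(1 - x)²`, the first is continuous at `1` with value `0` there, while the second is
`2 / (1 - x)`. -/

theorem hasSum_succ_mul_add_two_mul_geometric {𝕜 : Type*} [NormedField 𝕜] {r : 𝕜}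
    (hr : ‖r‖ < 1) :
    HasSum (fun n : ℕ => ((n : 𝕜) + 1) * (n + 2) * r ^ n) (2 / (1 - r) ^ 3) := by
  have hchoose (n : ℕ) : (2 : 𝕜) * (n + 2).choose 2 = (n + 1) * (n + 2) := by
    have := Nat.add_one_mul_choose_eq (n + 1) 1
    rw [Nat.choose_one_right] at this
    have hnat : 2 * (n + 2).choose 2 = (n + 1) * (n + 2) := by linarith
    simpa using congrArg (Nat.cast : ℕ → 𝕜) hnat
  have h := (hasSum_choose_mul_geometric_of_norm_lt_one 2 hr).mul_left 2
  simp_rw [← mul_assoc, hchoose] at h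
  rwa [mul_one_div] at h

theorem tendsto_const_div_one_sub_nhdsLT_one {c : ℝ} (hc : 0 < c) :
    Tendsto (fun x : ℝ => c / (1 - x)) (𝓝[<] 1) atTop := by
  have h : Tendsto (fun x : ℝ => 1 - x) (𝓝[<] 1) (𝓝[>] 0) := by
    have := (map_subLeft_nhdsLT (c := (1 : ℝ)) (a := 1)).le
    rwa [sub_self] at this
  simpa only [div_eq_mul_inv, Pi.inv_apply] using h.inv_tendsto_nhdsGT_zero.const_mul_atTop hc

theorem stmt_8 (a : ℕ → ℝ) (ha : ∀ n, a n = (-1) ^ n * (n + 1) * (n + 2)) :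
    (∀ x : ℝ, |x| < 1 → ∑' n, a n * x ^ n = 2 / (1 + x) ^ 3) ∧
    Tendsto (fun x : ℝ => (1 - x) ^ 2 * ∑' n, a n * x ^ n) (𝓝[<] 1) (𝓝 0) ∧
    (∀ x : ℝ, |x| < 1 → ∑' n, |a n| * x ^ n = 2 / (1 - x) ^ 3) ∧
    Tendsto (fun x : ℝ => (1 - x) ^ 2 * ∑' n, |a n| * x ^ n) (𝓝[<] 1) atTop := by
  have hsum (x : ℝ) (hx : |x| < 1) : ∑' n, a n * x ^ n = 2 / (1 + x) ^ 3 := calc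
    ∑' n, a n * x ^ n = ∑' n : ℕ, ((n : ℝ) + 1) * (n + 2) * (-x) ^ n :=
      tsum_congr fun n => by rw [ha, neg_pow]; ring
    _ = 2 / (1 + x) ^ 3 := by
      rw [(hasSum_succ_mul_add_two_mul_geometric (by simpa using hx)).tsum_eq, sub_neg_eq_add]
  have habs (x : ℝ) (hx : |x| < 1) : ∑' n, |a n| * x ^ n = 2 / (1 - x) ^ 3 := calc
    ∑' n, |a n| * x ^ n = ∑' n : ℕ, ((n : ℝ) + 1) * (n + 2) * x ^ n :=
      tsum_congr fun n => by rw [ha, abs_mul, abs_mul, abs_pow, abs_neg, abs_one, one_pow,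
        one_mul, abs_of_nonneg (by positivity), abs_of_nonneg (by positivity)]
    _ = 2 / (1 - x) ^ 3 := (hasSum_succ_mul_add_two_mul_geometric hx).tsum_eq
  have hdisk : ∀ᶠ x in 𝓝[<] (1 : ℝ), x ∈ Set.Ioo (-1) 1 := Ioo_mem_nhdsLT (by norm_num)
  refine ⟨hsum, ?_, habs, ?_⟩
  · have hcont : ContinuousAt (fun x : ℝ => (1 - x) ^ 2 * (2 / (1 + x) ^ 3)) 1 := by
      fun_prop (disch := norm_num)
    have hlim := hcont.tendsto.mono_left (nhdsWithin_le_nhds (s := Set.Iio 1))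
    rw [sub_self, zero_pow two_ne_zero, zero_mul] at hlim
    refine hlim.congr' ?_
    filter_upwards [hdisk] with x hx
    rw [hsum x (abs_lt.2 hx)]
  · refine (tendsto_const_div_one_sub_nhdsLT_one two_pos).congr' ?_
    filter_upwards [hdisk] with x hx
    have : 1 - x ≠ 0 := sub_ne_zero.2 hx.2.ne'
    rw [habs x (abs_lt.2 hx)]
    field_simp
end

section
/- Let 0 → A → B → C → 0 be a short exact sequence of positive chain complexes of R-modules with all homology ranks finite, and set δ𝒮ₙ = (−1)ⁿ·rank(im δₙ₊₁). Then for |x| < min(R(A), R(B), R(C), R(δ𝒮)): (1−x)·∑ₙ (δ𝒮)ₙxⁿ = χ̄(A) − χ̄(B) + χ̄(C), where χ̄(C) = ∑ₙ (−1)ⁿ rank(HₙC) xⁿ. -/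
/-!
Tensoring with the fraction field `Q` is exact, so ranks are additive along the long exact
homology sequence. Splitting it at the images of its maps gives, in every degree `n`,
`rank HₙA - rank HₙB + rank HₙC = rank im δₙ₊₁ + rank im δₙ`, where `im δ₀ = 0` because
`H₀B → H₀C` is onto. Multiplying by `(-x)ⁿ` and summing, the right-hand side telescopes
to `(1 - x) ∑ (-1)ⁿ rank(im δₙ₊₁) xⁿ`.
-/

open CategoryTheory Filter Topology

/-- The rank of an `R`-module `M`: the dimension over the fraction field `Q = Frac(R)`
of `Q ⊗_R M` (by convention `0` if that dimension is infinite). -/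
noncomputable def rk (R : Type) [CommRing R] [IsDomain R]
    (M : Type) [AddCommGroup M] [Module R M] : ℕ :=
  Module.finrank (FractionRing R) (TensorProduct R (FractionRing R) M)

open TensorProduct

section Rank

variable {R : Type} [CommRing R] [IsDomain R] {M N P : Type}
  [AddCommGroup M] [Module R M] [AddCommGroup N] [Module R N] [AddCommGroup P] [Module R P]

local notation "Q" => FractionRing R

/-- Since `Q` is flat over `R`, base change commutes with taking the image. -/
theorem rk_range_eq_finrank_range_baseChange (f : M →ₗ[R] N) :
    rk R (LinearMap.range f) = Module.finrank Q (LinearMap.range (f.baseChange Q)) := by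
  have hsurj : Function.Surjective (f.rangeRestrict.baseChange Q) := by
    rw [LinearMap.baseChange_eq_ltensor]
    exact LinearMap.lTensor_surjective Q f.surjective_rangeRestrict
  have hinj : Function.Injective ((LinearMap.range f).subtype.baseChange Q) := by
    rw [LinearMap.baseChange_eq_ltensor]
    exact Module.Flat.lTensor_preserves_injective_linearMap _ (Submodule.injective_subtype _)
  have hrange : LinearMap.range (f.baseChange Q) =
      LinearMap.range ((LinearMap.range f).subtype.baseChange Q) := by
    rw [← LinearMap.range_comp_of_range_eq_top _ (LinearMap.range_eq_top.mpr hsurj),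
      ← LinearMap.baseChange_comp]
    rfl
  rw [rk, hrange]
  exact (LinearEquiv.ofInjective _ hinj).finrank_eq

theorem rk_range_add_rk_range_of_exact {f : M →ₗ[R] N} {g : N →ₗ[R] P} (h : Function.Exact f g)
    [Module.Finite Q (Q ⊗[R] N)] :
    rk R (LinearMap.range f) + rk R (LinearMap.range g) = rk R N := by
  have hex : Function.Exact (f.baseChange Q) (g.baseChange Q) := by
    rw [LinearMap.baseChange_eq_ltensor, LinearMap.baseChange_eq_ltensor]
    exact Module.Flat.lTensor_exact Q h
  rw [rk_range_eq_finrank_range_baseChange, rk_range_eq_finrank_range_baseChange, rk,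
    ← LinearMap.exact_iff.mp hex, add_comm]
  exact LinearMap.finrank_range_add_finrank_ker _

theorem rk_range_of_surjective {g : N →ₗ[R] P} (h : Function.Surjective g) :
    rk R (LinearMap.range g) = rk R P := by
  have hsurj : Function.Surjective (g.baseChange Q) := by
    rw [LinearMap.baseChange_eq_ltensor]
    exact LinearMap.lTensor_surjective Q h
  rw [rk_range_eq_finrank_range_baseChange, rk, LinearMap.range_eq_top.mpr hsurj]
  exact finrank_top Q _

end Rank

namespace CategoryTheory.ShortComplex.ShortExact

variable {R : Type} [CommRing R] [IsDomain R]
  {S : ShortComplex (ChainComplex (ModuleCat R) ℕ)}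

local notation "Q" => FractionRing R

theorem rk_range_δ_add_rk_range_homologyMap_f (hS : S.ShortExact) {i j : ℕ}
    (hij : (ComplexShape.down ℕ).Rel i j) [Module.Finite Q (Q ⊗[R] S.X₁.homology j)] :
    rk R (LinearMap.range (hS.δ i j hij).hom) +
      rk R (LinearMap.range (HomologicalComplex.homologyMap S.f j).hom) =
      rk R (S.X₁.homology j) :=
  rk_range_add_rk_range_of_exact
    ((moduleCat_exact_iff_function_exact _).mp (hS.homology_exact₁ i j hij))

theorem rk_range_homologyMap_f_add_rk_range_homologyMap_g (hS : S.ShortExact) (n : ℕ)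
    [Module.Finite Q (Q ⊗[R] S.X₂.homology n)] :
    rk R (LinearMap.range (HomologicalComplex.homologyMap S.f n).hom) +
      rk R (LinearMap.range (HomologicalComplex.homologyMap S.g n).hom) =
      rk R (S.X₂.homology n) :=
  rk_range_add_rk_range_of_exact
    ((moduleCat_exact_iff_function_exact _).mp (hS.homology_exact₂ n))

theorem rk_range_homologyMap_g_add_rk_range_δ (hS : S.ShortExact) {i j : ℕ}
    (hij : (ComplexShape.down ℕ).Rel i j) [Module.Finite Q (Q ⊗[R] S.X₃.homology i)] :
    rk R (LinearMap.range (HomologicalComplex.homologyMap S.g i).hom) +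
      rk R (LinearMap.range (hS.δ i j hij).hom) =
      rk R (S.X₃.homology i) :=
  rk_range_add_rk_range_of_exact
    ((moduleCat_exact_iff_function_exact _).mp (hS.homology_exact₃ i j hij))

/-- In degree `0` there is no outgoing connecting map, so `H₀B → H₀C` is onto. -/
theorem rk_range_homologyMap_g_zero (hS : S.ShortExact) :
    rk R (LinearMap.range (HomologicalComplex.homologyMap S.g 0).hom) =
      rk R (S.X₃.homology 0) := by
  have := hS.epi_g
  have : Epi (HomologicalComplex.homologyMap S.g 0) :=
    HomologicalComplex.epi_homologyMap_of_epi_of_not_rel _ _ (by simp)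
  exact rk_range_of_surjective ((ModuleCat.epi_iff_surjective _).mp this)

theorem rk_homology_alternating_zero (hS : S.ShortExact)
    [Module.Finite Q (Q ⊗[R] S.X₁.homology 0)] [Module.Finite Q (Q ⊗[R] S.X₂.homology 0)] :
    (rk R (S.X₁.homology 0) : ℤ) - rk R (S.X₂.homology 0) + rk R (S.X₃.homology 0) =
      rk R (LinearMap.range (hS.δ 1 0 (by simp)).hom) := by
  have h₁ := hS.rk_range_δ_add_rk_range_homologyMap_f (i := 1) (j := 0) (by simp)
  have h₂ := hS.rk_range_homologyMap_f_add_rk_range_homologyMap_g 0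
  have h₃ := hS.rk_range_homologyMap_g_zero
  omega

theorem rk_homology_alternating_succ (hS : S.ShortExact) (n : ℕ)
    [Module.Finite Q (Q ⊗[R] S.X₁.homology (n + 1))]
    [Module.Finite Q (Q ⊗[R] S.X₂.homology (n + 1))]
    [Module.Finite Q (Q ⊗[R] S.X₃.homology (n + 1))] :
    (rk R (S.X₁.homology (n + 1)) : ℤ) - rk R (S.X₂.homology (n + 1)) +
        rk R (S.X₃.homology (n + 1)) =
      rk R (LinearMap.range (hS.δ (n + 2) (n + 1) (by simp)).hom) +
        rk R (LinearMap.range (hS.δ (n + 1) n (by simp)).hom) := by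
  have h₁ := hS.rk_range_δ_add_rk_range_homologyMap_f (i := n + 2) (j := n + 1) (by simp)
  have h₂ := hS.rk_range_homologyMap_f_add_rk_range_homologyMap_g (n + 1)
  have h₃ := hS.rk_range_homologyMap_g_add_rk_range_δ (i := n + 1) (j := n) (by simp)
  omega

end CategoryTheory.ShortComplex.ShortExact

theorem HasSum.of_eq_sub_mul_prev {α : Type*} [CommRing α] [TopologicalSpace α]
    [IsTopologicalRing α] {D f : ℕ → α} {s x : α} (hD : HasSum D s)
    (h₀ : f 0 = D 0) (hsucc : ∀ n, f (n + 1) = D (n + 1) - x * D n) :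
    HasSum f ((1 - x) * s) := by
  have hdiff : HasSum (fun n => f n - D n) (-x * s) := by
    rw [← hasSum_nat_add_iff' 1]
    simpa [h₀, hsucc, ← neg_mul] using hD.mul_left (-x)
  rw [show (1 - x) * s = -x * s + s by ring]
  simpa only [sub_add_cancel] using hdiff.add hD

theorem Summable.neg_one_pow_mul_mul_pow {u : ℕ → ℕ} {x : ℝ}
    (hu : Summable fun n => (u n : ℝ) * |x| ^ n) :
    Summable fun n => ((-1) ^ n * (u n : ℝ)) * x ^ n :=
  .of_norm (by simpa [abs_mul] using hu)

/-- The power series identity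
`(1−x)·χ̄(δ𝒮) = χ̄(A) − χ̄(B) + χ̄(C)` for a short exact sequence of positive chain
complexes with finite homology ranks, valid whenever all four series converge
absolutely at `x` (i.e. `|x|` is below all the radii of convergence). -/
theorem stmt_15 (R : Type) [CommRing R] [IsDomain R]
    (S : ShortComplex (ChainComplex (ModuleCat R) ℕ)) (hS : S.ShortExact)
    (hfinA : ∀ n, Module.Finite (FractionRing R)
      (TensorProduct R (FractionRing R) (S.X₁.homology n)))
    (hfinB : ∀ n, Module.Finite (FractionRing R)
      (TensorProduct R (FractionRing R) (S.X₂.homology n)))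
    (hfinC : ∀ n, Module.Finite (FractionRing R)
      (TensorProduct R (FractionRing R) (S.X₃.homology n)))
    (d : ℕ → ℕ)
    (hd : ∀ n, d n = rk R (LinearMap.range ((hS.δ (n + 1) n (by simp)).hom :
      S.X₃.homology (n + 1) →ₗ[R] S.X₁.homology n)))
    (x : ℝ)
    (hsA : Summable fun n => (rk R (S.X₁.homology n) : ℝ) * |x| ^ n)
    (hsB : Summable fun n => (rk R (S.X₂.homology n) : ℝ) * |x| ^ n)
    (hsC : Summable fun n => (rk R (S.X₃.homology n) : ℝ) * |x| ^ n)
    (hsd : Summable fun n => (d n : ℝ) * |x| ^ n) :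
    (1 - x) * ∑' n, ((-1) ^ n * (d n : ℝ)) * x ^ n =
      (∑' n, ((-1) ^ n * (rk R (S.X₁.homology n) : ℝ)) * x ^ n) -
      (∑' n, ((-1) ^ n * (rk R (S.X₂.homology n) : ℝ)) * x ^ n) +
      (∑' n, ((-1) ^ n * (rk R (S.X₃.homology n) : ℝ)) * x ^ n) := by
  have hzero : (rk R (S.X₁.homology 0) : ℝ) - rk R (S.X₂.homology 0) +
      rk R (S.X₃.homology 0) = d 0 := by
    rw [hd]
    exact_mod_cast hS.rk_homology_alternating_zero
  have hsucc (n : ℕ) : (rk R (S.X₁.homology (n + 1)) : ℝ) - rk R (S.X₂.homology (n + 1)) +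
      rk R (S.X₃.homology (n + 1)) = d (n + 1) + d n := by
    rw [hd, hd]
    exact_mod_cast hS.rk_homology_alternating_succ n
  have hA := hsA.neg_one_pow_mul_mul_pow
  have hB := hsB.neg_one_pow_mul_mul_pow
  have hC := hsC.neg_one_pow_mul_mul_pow
  have hEuler := hsd.neg_one_pow_mul_mul_pow.hasSum.of_eq_sub_mul_prev (x := x)
    (f := fun n => ((-1) ^ n * (rk R (S.X₁.homology n) : ℝ)) * x ^ n -
      ((-1) ^ n * (rk R (S.X₂.homology n) : ℝ)) * x ^ n +
      ((-1) ^ n * (rk R (S.X₃.homology n) : ℝ)) * x ^ n)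
    (by simpa using hzero) (fun n => by linear_combination (-1) ^ (n + 1) * x ^ (n + 1) * hsucc n)
  rw [← hEuler.tsum_eq, (hA.sub hB).tsum_add hC, hA.tsum_sub hB]
end

section
/- Let 0 → A → B → C → 0 be a short exact sequence of positive chain complexes of R-modules with finite homology ranks. If two of the three complexes A, B, C have homology rank sequence with power-series radius of convergence at least 1, then so does the third. -/
/-!
Tensoring with `Frac R` is exact, so every three consecutive terms of the long exact homology
sequence bound the rank of the middle one by the sum of the outer two:
`rk Hₙ B ≤ rk Hₙ A + rk Hₙ C`, `rk Hₙ A ≤ rk Hₙ₊₁ C + rk Hₙ B` and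
`rk Hₙ₊₁ C ≤ rk Hₙ₊₁ B + rk Hₙ A`.
Ranks are nonnegative, so the alternating series has radius at least `1` exactly when
`∑ rk Hₙ · xⁿ` converges for `0 ≤ x < 1`. By comparison this condition passes to a nonnegative
sequence dominated by a sum of two sequences satisfying it, and it is invariant under an index
shift; each of the three inequalities then yields one case of the theorem.
-/

open CategoryTheory Filter Topology

open Asymptotics

lemma Module.finrank_le_add_of_exact {K M N P : Type*} [Field K]
    [AddCommGroup M] [Module K M] [AddCommGroup N] [Module K N] [AddCommGroup P] [Module K P]
    [Module.Finite K M] [Module.Finite K N] [Module.Finite K P]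
    {f : M →ₗ[K] N} {g : N →ₗ[K] P} (h : Function.Exact f g) :
    finrank K N ≤ finrank K M + finrank K P := by
  have := g.finrank_range_add_finrank_ker
  rw [LinearMap.exact_iff.mp h] at this
  have := f.finrank_range_le
  have := (LinearMap.range g).finrank_le
  omega

lemma rk_le_add_of_exact {R : Type} [CommRing R] [IsDomain R]
    {M N P : Type} [AddCommGroup M] [Module R M] [AddCommGroup N] [Module R N]
    [AddCommGroup P] [Module R P]
    [Module.Finite (FractionRing R) (TensorProduct R (FractionRing R) M)]
    [Module.Finite (FractionRing R) (TensorProduct R (FractionRing R) N)]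
    [Module.Finite (FractionRing R) (TensorProduct R (FractionRing R) P)]
    {f : M →ₗ[R] N} {g : N →ₗ[R] P} (h : Function.Exact f g) :
    rk R N ≤ rk R M + rk R P := by
  have h' := Module.Flat.lTensor_exact (FractionRing R) h
  rw [← LinearMap.baseChange_eq_ltensor, ← LinearMap.baseChange_eq_ltensor] at h'
  exact Module.finrank_le_add_of_exact h'

namespace CategoryTheory.ShortComplex.ShortExact

variable {R : Type} [CommRing R] [IsDomain R] {ι : Type*} {c : ComplexShape ι}
  {S : ShortComplex (HomologicalComplex (ModuleCat R) c)}

lemma rk_homology_X₂_le (hS : S.ShortExact) (i : ι)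
    [Module.Finite (FractionRing R) (TensorProduct R (FractionRing R) (S.X₁.homology i))]
    [Module.Finite (FractionRing R) (TensorProduct R (FractionRing R) (S.X₂.homology i))]
    [Module.Finite (FractionRing R) (TensorProduct R (FractionRing R) (S.X₃.homology i))] :
    rk R (S.X₂.homology i) ≤ rk R (S.X₁.homology i) + rk R (S.X₃.homology i) :=
  rk_le_add_of_exact ((moduleCat_exact_iff_function_exact _).mp (hS.homology_exact₂ i))

lemma rk_homology_X₁_le (hS : S.ShortExact) {i j : ι} (hij : c.Rel i j)
    [Module.Finite (FractionRing R) (TensorProduct R (FractionRing R) (S.X₃.homology i))]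
    [Module.Finite (FractionRing R) (TensorProduct R (FractionRing R) (S.X₁.homology j))]
    [Module.Finite (FractionRing R) (TensorProduct R (FractionRing R) (S.X₂.homology j))] :
    rk R (S.X₁.homology j) ≤ rk R (S.X₃.homology i) + rk R (S.X₂.homology j) :=
  rk_le_add_of_exact ((moduleCat_exact_iff_function_exact _).mp (hS.homology_exact₁ i j hij))

lemma rk_homology_X₃_le (hS : S.ShortExact) {i j : ι} (hij : c.Rel i j)
    [Module.Finite (FractionRing R) (TensorProduct R (FractionRing R) (S.X₂.homology i))]
    [Module.Finite (FractionRing R) (TensorProduct R (FractionRing R) (S.X₃.homology i))]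
    [Module.Finite (FractionRing R) (TensorProduct R (FractionRing R) (S.X₁.homology j))] :
    rk R (S.X₃.homology i) ≤ rk R (S.X₂.homology i) + rk R (S.X₁.homology j) :=
  rk_le_add_of_exact ((moduleCat_exact_iff_function_exact _).mp (hS.homology_exact₃ i j hij))

end CategoryTheory.ShortComplex.ShortExact

lemma summable_norm_mul_pow_of_forall_abs_lt_one {f : ℕ → ℝ}
    (h : ∀ x : ℝ, |x| < 1 → Summable fun n => f n * x ^ n) {x : ℝ} (hx : |x| < 1) :
    Summable fun n => ‖f n * x ^ n‖ := by
  obtain ⟨r, hxr, hr1⟩ := exists_between hx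
  have hr : 0 < r := (abs_nonneg x).trans_lt hxr
  have hbdd : (fun n => ‖f n * r ^ n‖) =O[atTop] fun _ => (1 : ℝ) :=
    (h r (by rwa [abs_of_pos hr])).tendsto_atTop_zero.norm.isBigO_one ℝ
  refine summable_of_isBigO_nat (summable_geometric_of_lt_one (by positivity)
    ((div_lt_one hr).mpr hxr)) ?_
  refine (hbdd.mul (isBigO_refl (fun n => (|x| / r) ^ n) atTop)).congr (fun n => ?_)
    fun n => one_mul _
  simp only [norm_mul, norm_pow, Real.norm_eq_abs, abs_of_pos hr]
  rw [div_pow, mul_assoc, mul_div_cancel₀ _ (pow_ne_zero n hr.ne')]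

/-- For nonnegative `c`, this says that `∑ cₙ xⁿ` has radius of convergence at least `1`. -/
def ConvergesBelowOne (c : ℕ → ℝ) : Prop :=
  ∀ x : ℝ, 0 ≤ x → x < 1 → Summable fun n => c n * x ^ n

lemma convergesBelowOne_iff_alternating {c : ℕ → ℝ} (hc : ∀ n, 0 ≤ c n) :
    (∀ x : ℝ, |x| < 1 → Summable fun n => ((-1) ^ n * c n) * x ^ n) ↔ ConvergesBelowOne c := by
  have hnorm : ∀ x : ℝ, ∀ n, ‖((-1) ^ n * c n) * x ^ n‖ = c n * |x| ^ n := fun x n => by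
    rw [norm_mul, norm_mul, norm_pow, norm_neg, norm_one, one_pow, one_mul,
      Real.norm_of_nonneg (hc n), norm_pow, Real.norm_eq_abs]
  constructor
  · intro h x hx0 hx1
    have := summable_norm_mul_pow_of_forall_abs_lt_one h (by rwa [abs_of_nonneg hx0])
    simpa only [hnorm, abs_of_nonneg hx0] using this
  · intro h x hx
    exact .of_norm_bounded (h |x| (abs_nonneg x) hx) fun n => (hnorm x n).le

lemma ConvergesBelowOne.of_le_add {a b c : ℕ → ℝ} (hc : ∀ n, 0 ≤ c n)
    (hle : ∀ n, c n ≤ a n + b n) (ha : ConvergesBelowOne a) (hb : ConvergesBelowOne b) :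
    ConvergesBelowOne c := fun x hx0 hx1 =>
  .of_nonneg_of_le (fun n => mul_nonneg (hc n) (pow_nonneg hx0 n))
    (fun n => by rw [← add_mul]; exact mul_le_mul_of_nonneg_right (hle n) (pow_nonneg hx0 n))
    ((ha x hx0 hx1).add (hb x hx0 hx1))

lemma summable_mul_zero_pow (c : ℕ → ℝ) : Summable fun n => c n * 0 ^ n :=
  summable_of_ne_finset_zero (s := {0}) fun n hn => by
    rw [zero_pow (Finset.notMem_singleton.mp hn), mul_zero]

lemma convergesBelowOne_comp_succ_iff {c : ℕ → ℝ} :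
    ConvergesBelowOne (fun n => c (n + 1)) ↔ ConvergesBelowOne c := by
  refine forall₂_congr fun x hx0 => imp_congr_right fun _ => ?_
  rcases hx0.eq_or_lt with rfl | hx
  · exact iff_of_true (summable_mul_zero_pow _) (summable_mul_zero_pow _)
  rw [← summable_nat_add_iff 1 (f := fun n => c n * x ^ n), ← summable_mul_left_iff hx.ne']
  exact summable_congr fun n => by ring

theorem stmt_17_general (R : Type) [CommRing R] [IsDomain R]
    (S : ShortComplex (ChainComplex (ModuleCat R) ℕ)) (hS : S.ShortExact)
    (hfinA : ∀ n, Module.Finite (FractionRing R)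
      (TensorProduct R (FractionRing R) (S.X₁.homology n)))
    (hfinB : ∀ n, Module.Finite (FractionRing R)
      (TensorProduct R (FractionRing R) (S.X₂.homology n)))
    (hfinC : ∀ n, Module.Finite (FractionRing R)
      (TensorProduct R (FractionRing R) (S.X₃.homology n)))
    (RadGe1 : ChainComplex (ModuleCat R) ℕ → Prop)
    (hRad : ∀ X : ChainComplex (ModuleCat R) ℕ, RadGe1 X ↔
      ∀ x : ℝ, |x| < 1 → Summable fun n => ((-1) ^ n * (rk R (X.homology n) : ℝ)) * x ^ n) :
    (RadGe1 S.X₁ ∧ RadGe1 S.X₂ → RadGe1 S.X₃) ∧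
    (RadGe1 S.X₁ ∧ RadGe1 S.X₃ → RadGe1 S.X₂) ∧
    (RadGe1 S.X₂ ∧ RadGe1 S.X₃ → RadGe1 S.X₁) := by
  have hrel : ∀ n, (ComplexShape.down ℕ).Rel (n + 1) n := fun _ => rfl
  simp only [fun X => (hRad X).trans (convergesBelowOne_iff_alternating fun n => Nat.cast_nonneg
    (rk R (X.homology n)))]
  refine ⟨fun ⟨hA, hB⟩ => ?_, fun ⟨hA, hC⟩ => ?_, fun ⟨hB, hC⟩ => ?_⟩
  · exact convergesBelowOne_comp_succ_iff.mp <| .of_le_add (fun _ => Nat.cast_nonneg _)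
      (fun n => by exact_mod_cast hS.rk_homology_X₃_le (hrel n))
      (convergesBelowOne_comp_succ_iff.mpr hB) hA
  · exact .of_le_add (fun _ => Nat.cast_nonneg _)
      (fun n => by exact_mod_cast hS.rk_homology_X₂_le n) hA hC
  · exact .of_le_add (fun _ => Nat.cast_nonneg _)
      (fun n => by exact_mod_cast hS.rk_homology_X₁_le (hrel n))
      (convergesBelowOne_comp_succ_iff.mpr hC) hB

/-- Two-out-of-three for radius of convergence at least 1 of the alternating homology
rank series, for a short exact sequence of positive chain complexes with finite
homology ranks. (`RadGe1 X` expresses that the power series `∑ (−1)ⁿ rank(HₙX) xⁿ`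
converges for every `|x| < 1`, i.e. has radius of convergence at least 1.) -/
theorem stmt_17 (R : Type) [CommRing R] [IsDomain R] [IsNoetherianRing R]
    (S : ShortComplex (ChainComplex (ModuleCat R) ℕ)) (hS : S.ShortExact)
    (hfinA : ∀ n, Module.Finite (FractionRing R)
      (TensorProduct R (FractionRing R) (S.X₁.homology n)))
    (hfinB : ∀ n, Module.Finite (FractionRing R)
      (TensorProduct R (FractionRing R) (S.X₂.homology n)))
    (hfinC : ∀ n, Module.Finite (FractionRing R)
      (TensorProduct R (FractionRing R) (S.X₃.homology n)))
    (RadGe1 : ChainComplex (ModuleCat R) ℕ → Prop)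
    (hRad : ∀ X : ChainComplex (ModuleCat R) ℕ, RadGe1 X ↔
      ∀ x : ℝ, |x| < 1 → Summable fun n => ((-1) ^ n * (rk R (X.homology n) : ℝ)) * x ^ n) :
    (RadGe1 S.X₁ ∧ RadGe1 S.X₂ → RadGe1 S.X₃) ∧
    (RadGe1 S.X₁ ∧ RadGe1 S.X₃ → RadGe1 S.X₂) ∧
    (RadGe1 S.X₂ ∧ RadGe1 S.X₃ → RadGe1 S.X₁) :=
  stmt_17_general R S hS hfinA hfinB hfinC RadGe1 hRad
end

section
/- Let 0 → A → B → C → 0 be a short exact sequence of positive chain complexes with finite homology ranks, and suppose at least one of the sequences (rank HₙA)ₙ or (rank HₙC)ₙ is of controlled absolute growth. Then the sequence δ𝒮ₙ = (−1)ⁿ rank(im δₙ₊₁) is of controlled absolute growth, i.e. the short exact sequence is A-admissible. -/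
/-!
The image of `δₙ₊₁` is a quotient of `Hₙ₊₁C` and a submodule of `HₙA`. Since `Frac R` is flat
over `R`, rank does not increase under either operation, so `rank(im δₙ₊₁)` is dominated both by
`rank HₙA` and by the shifted sequence `rank Hₙ₊₁C`. Controlled growth passes to nonnegative
minorants (compare the power series termwise for `0 < x < 1`) and to shifts (the power series of
the shift is `(F(x) - b₀)/x`).
-/

open CategoryTheory Filter Topology

/-- A (nonnegative) sequence is of controlled absolute growth: its power series has radius
of convergence at least `1` and `(1−x)²·∑ bₙxⁿ → 0` as `x → 1⁻`. -/
def ControlledGrowth (b : ℕ → ℝ) : Prop :=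
  (∀ x : ℝ, |x| < 1 → Summable fun n => b n * x ^ n) ∧
    Tendsto (fun x : ℝ => (1 - x) ^ 2 * ∑' n, b n * x ^ n) (𝓝[<] 1) (𝓝 0)

section Rank

open Module

variable (R : Type) [CommRing R] [IsDomain R]
  {M N : Type} [AddCommGroup M] [Module R M] [AddCommGroup N] [Module R N]

theorem rk_range_le_domain [Module.Finite (FractionRing R) (TensorProduct R (FractionRing R) M)]
    (f : M →ₗ[R] N) : rk R (LinearMap.range f) ≤ rk R M := by
  have hsurj : Function.Surjective (f.rangeRestrict.baseChange (FractionRing R)) := by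
    rw [LinearMap.baseChange_eq_ltensor]
    exact LinearMap.lTensor_surjective _ f.surjective_rangeRestrict
  calc rk R (LinearMap.range f)
      = finrank (FractionRing R) (LinearMap.range (f.rangeRestrict.baseChange _)) := by
        rw [LinearMap.range_eq_top.2 hsurj, finrank_top]; rfl
    _ ≤ rk R M := LinearMap.finrank_range_le _

theorem rk_range_le_codomain [Module.Finite (FractionRing R) (TensorProduct R (FractionRing R) N)]
    (f : M →ₗ[R] N) : rk R (LinearMap.range f) ≤ rk R N := by
  have hinj : Function.Injective ((LinearMap.range f).subtype.baseChange (FractionRing R)) := by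
    rw [LinearMap.baseChange_eq_ltensor]
    exact Module.Flat.lTensor_preserves_injective_linearMap _ (Submodule.injective_subtype _)
  exact LinearMap.finrank_le_finrank_of_injective hinj

end Rank

theorem Ioo_mem_nhdsLT_one : Set.Ioo (0 : ℝ) 1 ∈ 𝓝[<] (1 : ℝ) :=
  Ioo_mem_nhdsLT_of_mem ⟨zero_lt_one, le_rfl⟩

theorem summable_mul_pow_succ {b : ℕ → ℝ} {x : ℝ} (hb : Summable fun n => b n * x ^ n) :
    Summable fun n => b (n + 1) * x ^ n := by
  rcases eq_or_ne x 0 with rfl | hx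
  · exact summable_of_ne_finset_zero (s := {0}) fun n hn => by
      simp [zero_pow (Finset.notMem_singleton.1 hn)]
  · refine (((summable_nat_add_iff 1).2 hb).mul_right x⁻¹).congr fun n => ?_
    field_simp
    ring

theorem tsum_mul_pow_eq_add_mul_tsum {b : ℕ → ℝ} {x : ℝ} (hb : Summable fun n => b n * x ^ n) :
    ∑' n, b n * x ^ n = b 0 + x * ∑' n, b (n + 1) * x ^ n := by
  rw [hb.tsum_eq_zero_add, ← tsum_mul_left, pow_zero, mul_one]
  exact congrArg _ (tsum_congr fun n => by ring)

namespace ControlledGrowth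

theorem of_le {b d : ℕ → ℝ} (hb : ControlledGrowth b) (hd0 : ∀ n, 0 ≤ d n)
    (hdb : ∀ n, d n ≤ b n) : ControlledGrowth d := by
  have hsum : ∀ x : ℝ, |x| < 1 → Summable fun n => d n * x ^ n := fun x hx =>
    (hb.1 |x| (by rwa [abs_abs])).of_norm_bounded fun n => by
      rw [Real.norm_eq_abs, abs_mul, abs_pow, abs_of_nonneg (hd0 n)]
      exact mul_le_mul_of_nonneg_right (hdb n) (pow_nonneg (abs_nonneg x) n)
  refine ⟨hsum, tendsto_of_tendsto_of_tendsto_of_le_of_le' tendsto_const_nhds hb.2 ?_ ?_⟩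
  all_goals filter_upwards [Ioo_mem_nhdsLT_one] with x ⟨hx0, hx1⟩
  · exact mul_nonneg (sq_nonneg _) (tsum_nonneg fun n => mul_nonneg (hd0 n) (pow_nonneg hx0.le n))
  · have hx : |x| < 1 := by rwa [abs_of_pos hx0]
    refine mul_le_mul_of_nonneg_left ?_ (sq_nonneg _)
    exact (hsum x hx).tsum_le_tsum
      (fun n => mul_le_mul_of_nonneg_right (hdb n) (pow_nonneg hx0.le n)) (hb.1 x hx)

theorem shift {b : ℕ → ℝ} (hb : ControlledGrowth b) : ControlledGrowth fun n => b (n + 1) := by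
  refine ⟨fun x hx => summable_mul_pow_succ (hb.1 x hx), ?_⟩
  have hb0 : Tendsto (fun x : ℝ => (1 - x) ^ 2 * b 0) (𝓝[<] 1) (𝓝 0) :=
    ((by fun_prop : Continuous fun x : ℝ => (1 - x) ^ 2 * b 0).tendsto' 1 0 (by simp)).mono_left
      nhdsWithin_le_nhds
  have hid : Tendsto (fun x : ℝ => x) (𝓝[<] 1) (𝓝 1) := tendsto_nhdsWithin_of_tendsto_nhds tendsto_id
  have hlim := (hb.2.sub hb0).div hid one_ne_zero
  rw [sub_zero, zero_div] at hlim
  refine hlim.congr' ?_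
  filter_upwards [Ioo_mem_nhdsLT_one] with x ⟨hx0, hx1⟩
  rw [Pi.div_apply, tsum_mul_pow_eq_add_mul_tsum (hb.1 x (by rwa [abs_of_pos hx0])),
    div_eq_iff hx0.ne']
  ring

end ControlledGrowth

/-- If in a short exact sequence of positive chain complexes with finite homology ranks
one of the homology rank sequences of `A` or `C` is of controlled absolute growth, then
so is the connecting-homomorphism sequence `δ𝒮ₙ = (−1)ⁿ rank(im δₙ₊₁)`; that is, the
short exact sequence is A-admissible. -/
theorem stmt_18 (R : Type) [CommRing R] [IsDomain R]
    (S : ShortComplex (ChainComplex (ModuleCat R) ℕ)) (hS : S.ShortExact)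
    (hfinA : ∀ n, Module.Finite (FractionRing R)
      (TensorProduct R (FractionRing R) (S.X₁.homology n)))
    (hfinC : ∀ n, Module.Finite (FractionRing R)
      (TensorProduct R (FractionRing R) (S.X₃.homology n)))
    (d : ℕ → ℕ)
    (hd : ∀ n, d n = rk R (LinearMap.range ((hS.δ (n + 1) n (by simp)).hom :
      S.X₃.homology (n + 1) →ₗ[R] S.X₁.homology n)))
    (h : ControlledGrowth (fun n => (rk R (S.X₁.homology n) : ℝ)) ∨
         ControlledGrowth (fun n => (rk R (S.X₃.homology n) : ℝ))) :
    ControlledGrowth (fun n => (d n : ℝ)) := by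
  refine h.elim (fun hA => hA.of_le (fun n => by positivity) fun n => ?_)
    (fun hC => hC.shift.of_le (fun n => by positivity) fun n => ?_)
  · have := hfinA n
    exact_mod_cast (hd n).trans_le (rk_range_le_codomain R _)
  · have := hfinC (n + 1)
    exact_mod_cast (hd n).trans_le (rk_range_le_domain R _)
end

section
/- Let C be a positive chain complex of finitely generated R-modules such that (1−x)²·∑ₙ (−1)ⁿrank(BₙC)xⁿ → 0 as x → 1⁻, where BₙC = im(dₙ₊₁). Then the alternating homology rank sequence (HC)ₙ = (−1)ⁿrank HₙC possesses an Abel limit if and only if the alternating chain rank sequence (RC)ₙ = (−1)ⁿrank Cₙ does, and in that case A-lim HC = A-lim RC. Key identity: rank BₙC + rank Bₙ₋₁C + rank HₙC = rank Cₙ for all n (with B₋₁C = 0). -/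
open CategoryTheory Filter Topology

/-
Since `Frac R` is flat over `R`, rank is additive on short exact sequences of finitely generated
modules. Applied to `0 → Zₙ → Cₙ → Bₙ₋₁ → 0` and `0 → Bₙ → Zₙ → Hₙ → 0` (`Zₙ` is finitely
generated because `R` is noetherian) this gives `rank Bₙ + rank Bₙ₋₁ + rank Hₙ = rank Cₙ`.
With `bₙ = (-1)ⁿ rank Bₙ`, the alternating chain ranks are therefore the alternating homology
ranks plus `bₙ - bₙ₋₁`, whose generating series is `(1 - x) ∑ bₙ xⁿ`. By hypothesis this
sequence has Abel limit `0`, and Abel limits are additive.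
-/

section Rank

variable {R : Type} [CommRing R] [IsDomain R]

lemma rk_congr {M N : Type} [AddCommGroup M] [Module R M] [AddCommGroup N] [Module R N]
    (e : M ≃ₗ[R] N) : rk R M = rk R N :=
  (e.baseChange R (FractionRing R) _ _).finrank_eq

lemma rk_bot (M : Type) [AddCommGroup M] [Module R M] : rk R (⊥ : Submodule R M) = 0 :=
  Module.finrank_zero_of_subsingleton

lemma rk_submodule_add_rk_quotient {M : Type} [AddCommGroup M] [Module R M] [Module.Finite R M]
    (N : Submodule R M) : rk R N + rk R (M ⧸ N) = rk R M := by
  set Q := FractionRing R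
  have hinj : Function.Injective (N.subtype.baseChange Q) := by
    rw [LinearMap.baseChange_eq_ltensor]
    exact Module.Flat.lTensor_preserves_injective_linearMap _ N.injective_subtype
  have hsurj : Function.Surjective (N.mkQ.baseChange Q) := by
    rw [LinearMap.baseChange_eq_ltensor]
    exact LinearMap.lTensor_surjective Q N.mkQ_surjective
  have hexact : Function.Exact (N.subtype.baseChange Q) (N.mkQ.baseChange Q) := by
    rw [LinearMap.baseChange_eq_ltensor, LinearMap.baseChange_eq_ltensor]
    exact Module.Flat.lTensor_exact Q (LinearMap.exact_subtype_mkQ N)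
  have h := LinearMap.finrank_range_add_finrank_ker (N.mkQ.baseChange Q)
  rw [LinearMap.range_eq_top.mpr hsurj, finrank_top, hexact.linearMap_ker_eq,
    LinearMap.finrank_range_of_inj hinj] at h
  exact (add_comm _ _).trans h

lemma rk_ker_add_rk_range {M N : Type} [AddCommGroup M] [Module R M] [Module.Finite R M]
    [AddCommGroup N] [Module R N] (f : M →ₗ[R] N) :
    rk R (LinearMap.ker f) + rk R (LinearMap.range f) = rk R M := by
  rw [rk_congr f.quotKerEquivRange.symm, rk_submodule_add_rk_quotient]

end Rank

lemma CategoryTheory.ShortComplex.rk_range_f_add_rk_range_g_add_rk_homology {R : Type}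
    [CommRing R] [IsDomain R] [IsNoetherianRing R] (S : ShortComplex (ModuleCat R))
    [Module.Finite R S.X₂] :
    rk R (LinearMap.range S.f.hom) + rk R (LinearMap.range S.g.hom) + rk R S.homology =
      rk R S.X₂ := by
  have hcycles := rk_ker_add_rk_range S.g.hom
  have hhomology := rk_submodule_add_rk_quotient (LinearMap.range S.moduleCatToCycles)
  have hboundaries :
      rk R (LinearMap.range S.moduleCatToCycles) = rk R (LinearMap.range S.f.hom) :=
    (rk_congr (LinearEquiv.ofEq _ _ (LinearMap.range_codRestrict _ _ _))).trans
      (rk_congr (Submodule.comapSubtypeEquivOfLe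
        (LinearMap.range_le_ker_iff.2 (ModuleCat.hom_ext_iff.1 S.zero))))
  have hH : rk R S.homology =
      rk R (LinearMap.ker S.g.hom ⧸ LinearMap.range S.moduleCatToCycles) :=
    rk_congr S.moduleCatHomologyIso.toLinearEquiv
  omega

-- For `n = 0` the middle term is `rk (range (C.d 0 0)) = 0`.
lemma ChainComplex.rk_range_d_add_rk_range_d_add_rk_homology {R : Type}
    [CommRing R] [IsDomain R] [IsNoetherianRing R] (C : ChainComplex (ModuleCat R) ℕ)
    (n : ℕ) [Module.Finite R (C.X n)] :
    rk R (LinearMap.range (C.d (n + 1) n).hom) + rk R (LinearMap.range (C.d n (n - 1)).hom) +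
      rk R (C.homology n) = rk R (C.X n) := by
  rw [rk_congr (C.homologyIsoSc' (n + 1) n (n - 1) (by simp) (by cases n <;> simp)).toLinearEquiv]
  have : Module.Finite R (C.sc' (n + 1) n (n - 1)).X₂ := ‹Module.Finite R (C.X n)›
  exact (C.sc' (n + 1) n (n - 1)).rk_range_f_add_rk_range_g_add_rk_homology

lemma eventually_abs_lt_one_nhdsLT_one : ∀ᶠ x : ℝ in 𝓝[<] 1, |x| < 1 :=
  Filter.mem_of_superset (Ioo_mem_nhdsLT (by norm_num : (-1 : ℝ) < 1))
    fun _ hx => abs_lt.2 hx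

namespace HasAbelLim

variable {a b : ℕ → ℝ} {L M : ℝ}

lemma add (ha : HasAbelLim a L) (hb : HasAbelLim b M) :
    HasAbelLim (fun n => a n + b n) (L + M) := by
  refine ⟨fun x hx => ((ha.1 x hx).add (hb.1 x hx)).congr fun n => (add_mul _ _ _).symm,
    (ha.2.add hb.2).congr' ?_⟩
  filter_upwards [eventually_abs_lt_one_nhdsLT_one] with x hx
  simp only [add_mul, (ha.1 x hx).tsum_add (hb.1 x hx), mul_add]

lemma neg (ha : HasAbelLim a L) : HasAbelLim (fun n => -a n) (-L) := by
  refine ⟨fun x hx => (ha.1 x hx).neg.congr fun n => (neg_mul _ _).symm, ha.2.neg.congr ?_⟩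
  intro x
  simp only [neg_mul, tsum_neg, mul_neg]

lemma add_iff_of_zero (hb : HasAbelLim b 0) :
    HasAbelLim (fun n => a n + b n) L ↔ HasAbelLim a L := by
  refine ⟨fun h => ?_, fun h => by simpa using h.add hb⟩
  simpa using h.add hb.neg

end HasAbelLim

lemma hasAbelLim_sub_shift {b : ℕ → ℝ}
    (hsum : ∀ x : ℝ, |x| < 1 → Summable fun n => b n * x ^ n)
    (hlim : Tendsto (fun x : ℝ => (1 - x) ^ 2 * ∑' n, b n * x ^ n) (𝓝[<] 1) (𝓝 0)) :
    HasAbelLim (fun n => b n - if n = 0 then 0 else b (n - 1)) 0 := by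
  have hshift : ∀ x : ℝ, |x| < 1 →
      HasSum (fun n => (if n = 0 then 0 else b (n - 1)) * x ^ n) (x * ∑' n, b n * x ^ n) := by
    intro x hx
    rw [← hasSum_nat_add_iff' 1]
    simpa [pow_succ, mul_comm, mul_left_comm] using ((hsum x hx).hasSum.mul_left x)
  have hseries : ∀ x : ℝ, |x| < 1 → HasSum (fun n => (b n - if n = 0 then 0 else b (n - 1)) * x ^ n)
      ((1 - x) * ∑' n, b n * x ^ n) := by
    intro x hx
    simpa [sub_mul, one_sub_mul] using (hsum x hx).hasSum.sub (hshift x hx)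
  refine ⟨fun x hx => (hseries x hx).summable, hlim.congr' ?_⟩
  filter_upwards [eventually_abs_lt_one_nhdsLT_one] with x hx
  rw [(hseries x hx).tsum_eq, sq, mul_assoc]

/-- For a positive chain complex `C` of finitely generated modules over a commutative
noetherian integral domain whose boundary rank sequence satisfies
`(1−x)²·∑ (−1)ⁿ rank(BₙC) xⁿ → 0` as `x → 1⁻`, the alternating homology rank sequence
has an Abel limit iff the alternating chain rank sequence does, with the same limit;
moreover `rank BₙC + rank Bₙ₋₁C + rank HₙC = rank Cₙ` for all `n` (with `B₋₁C = 0`). -/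
theorem stmt_19 (R : Type) [CommRing R] [IsDomain R] [IsNoetherianRing R]
    (C : ChainComplex (ModuleCat R) ℕ) (hfg : ∀ n, Module.Finite R (C.X n))
    (BC HC RC : ℕ → ℕ)
    (hBC : ∀ n, BC n = rk R (LinearMap.range ((C.d (n + 1) n).hom : C.X (n + 1) →ₗ[R] C.X n)))
    (hHC : ∀ n, HC n = rk R (C.homology n))
    (hRC : ∀ n, RC n = rk R (C.X n))
    (hrB : ∀ x : ℝ, |x| < 1 → Summable fun n => ((-1) ^ n * (BC n : ℝ)) * x ^ n)
    (hB : Tendsto (fun x : ℝ => (1 - x) ^ 2 * ∑' n, ((-1) ^ n * (BC n : ℝ)) * x ^ n)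
      (𝓝[<] 1) (𝓝 0)) :
    (∀ n : ℕ, BC n + (if n = 0 then 0 else BC (n - 1)) + HC n = RC n) ∧
    ∀ L : ℝ, HasAbelLim (fun n => (-1) ^ n * (HC n : ℝ)) L ↔
      HasAbelLim (fun n => (-1) ^ n * (RC n : ℝ)) L := by
  have hrank (n : ℕ) : BC n + (if n = 0 then 0 else BC (n - 1)) + HC n = RC n := by
    have := hfg n
    have hrk := C.rk_range_d_add_rk_range_d_add_rk_homology n
    rcases n with _ | m
    · rw [C.shape 0 (0 - 1) (by simp), ModuleCat.hom_zero, LinearMap.range_zero, rk_bot] at hrk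
      simpa [hBC, hHC, hRC] using hrk
    · simpa [hBC, hHC, hRC] using hrk
  refine ⟨hrank, fun L => ?_⟩
  set b : ℕ → ℝ := fun n => (-1) ^ n * (BC n : ℝ)
  have hsplit : (fun n => (-1) ^ n * (RC n : ℝ)) =
      fun n => (-1) ^ n * (HC n : ℝ) + (b n - if n = 0 then 0 else b (n - 1)) := by
    funext n
    have hn : (RC n : ℝ) = BC n + (if n = 0 then 0 else BC (n - 1) : ℕ) + HC n := by
      exact_mod_cast (hrank n).symm
    rcases n with _ | m
    · simp only [hn, b, ↓reduceIte]; ring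
    · simp only [hn, b, if_neg (Nat.succ_ne_zero m), Nat.add_sub_cancel]; ring
  rw [hsplit, HasAbelLim.add_iff_of_zero (hasAbelLim_sub_shift hrB hB)]
end
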